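/- Let 0 < α < n and 1 ≤ p < n/α. There is a constant A = A(n, α, p) such that for every measurable function f ≥ 0 with f ∈ L^p(ℝⁿ) and every x ∈ ℝⁿ, I_α f(x) ≤ A ‖f‖_p^{αp/n} (Mf(x))^{1 − αp/n}. -/

import Mathlib

/-!
Split the potential at a radius `δ`. On the dyadic annulus `r ≤ ‖x - y‖ < 2r` the kernel is at
most `r^(α-n)` and `|f|` has mass at most `|B(x, 2r)| Mf(x)`, so the annuli inside `B(x, δ)`
contribute a geometric series summing to `O(δ^α Mf(x))`. Outside `B(x, δ)`, Hölder's inequality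
gives `‖f‖_p` times the `L^p'` norm of the kernel there, which the same dyadic count bounds by
`O(δ^(α-n/p))` precisely because `αp < n` (for `p = 1` the kernel is just at most `δ^(α-n)`).
Taking `δ = (‖f‖_p / Mf(x))^(p/n)` makes both terms `‖f‖_p^(αp/n) Mf(x)^(1-αp/n)`; if
`Mf(x) = 0` then `f = 0` a.e., and if `Mf(x) = ∞` there is nothing to prove.
-/

open MeasureTheory Set ENNReal Metric

/-- The normalizing constant `γ_n(α) = π^(n/2) 2^α Γ(α/2) / Γ((n-α)/2)` of the Riesz
kernel. -/
noncomputable def rieszGamma (n : ℕ) (α : ℝ) : ℝ :=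
  Real.pi ^ ((n : ℝ) / 2) * 2 ^ α * Real.Gamma (α / 2) / Real.Gamma (((n : ℝ) - α) / 2)

/-- The Hardy–Littlewood maximal function, valued in the extended reals. -/
noncomputable def maximalFn {n : ℕ} (f : EuclideanSpace ℝ (Fin n) → ℝ)
    (x : EuclideanSpace ℝ (Fin n)) : ℝ≥0∞ :=
  ⨆ r ∈ Ioi (0:ℝ), (volume (ball x r))⁻¹ * ∫⁻ y in ball x r, ENNReal.ofReal |f y|

open Module

section Dyadic

variable {X : Type*} [MetricSpace X] {x y : X} {r δ : ℝ}

def dyadicAnnulus (x : X) (r : ℝ) : Set X := ball x (2 * r) \ ball x r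

lemma mem_dyadicAnnulus : y ∈ dyadicAnnulus x r ↔ r ≤ dist y x ∧ dist y x < 2 * r := by
  rw [dyadicAnnulus, mem_sdiff, mem_ball, mem_ball, not_lt, and_comm]

lemma measurableSet_dyadicAnnulus [MeasurableSpace X] [OpensMeasurableSpace X] :
    MeasurableSet (dyadicAnnulus x r) :=
  measurableSet_ball.diff measurableSet_ball

lemma exists_zpow_mem_dyadicAnnulus (hy : y ≠ x) (hδ : 0 < δ) :
    ∃ k : ℤ, y ∈ dyadicAnnulus x (δ * 2 ^ k) := by
  obtain ⟨k, hk₁, hk₂⟩ :=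
    exists_mem_Ico_zpow (div_pos (dist_pos.mpr hy) hδ) (one_lt_two (α := ℝ))
  rw [le_div_iff₀ hδ, mul_comm] at hk₁
  rw [div_lt_iff₀ hδ, zpow_add_one₀ two_ne_zero] at hk₂
  exact ⟨k, mem_dyadicAnnulus.mpr ⟨hk₁, by linarith⟩⟩

lemma ball_diff_singleton_subset_iUnion_dyadicAnnulus (hδ : 0 < δ) :
    ball x δ \ {x} ⊆ ⋃ k : ℕ, dyadicAnnulus x (δ / 2 ^ (k + 1)) := by
  rintro y ⟨hyδ, hyx⟩
  obtain ⟨k, hk⟩ := exists_zpow_mem_dyadicAnnulus hyx hδ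
  have hk₀ : k < 0 := by
    rw [← zpow_lt_one_iff_right₀ (one_lt_two (α := ℝ))]
    nlinarith [mem_ball.mp hyδ, (mem_dyadicAnnulus.mp hk).1]
  obtain ⟨j, rfl⟩ := Int.eq_negSucc_of_lt_zero hk₀
  rw [zpow_negSucc, ← div_eq_mul_inv] at hk
  exact mem_iUnion.mpr ⟨j, hk⟩

lemma compl_ball_subset_iUnion_dyadicAnnulus (hδ : 0 < δ) :
    (ball x δ)ᶜ ⊆ ⋃ k : ℕ, dyadicAnnulus x (δ * 2 ^ k) := by
  intro y hy
  have hyδ : δ ≤ dist y x := not_lt.mp hy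
  obtain ⟨k, hk⟩ := exists_zpow_mem_dyadicAnnulus (dist_pos.mp (hδ.trans_le hyδ)) hδ
  have hk₀ : 0 ≤ k := by
    rw [← Int.lt_add_one_iff, ← one_lt_zpow_iff_right₀ (one_lt_two (α := ℝ)),
      zpow_add_one₀ two_ne_zero]
    nlinarith [(mem_dyadicAnnulus.mp hk).2]
  lift k to ℕ using hk₀
  rw [zpow_natCast] at hk
  exact mem_iUnion.mpr ⟨k, hk⟩

end Dyadic

lemma tsum_ofReal_mul_pow {A c : ℝ} (hA : 0 ≤ A) (hc₀ : 0 ≤ c) (hc₁ : c < 1) :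
    ∑' k : ℕ, ENNReal.ofReal (A * c ^ k) = ENNReal.ofReal (A / (1 - c)) := by
  rw [← ENNReal.ofReal_tsum_of_nonneg (fun k => by positivity)
    ((summable_geometric_of_lt_one hc₀ hc₁).mul_left A), tsum_mul_left,
    tsum_geometric_of_lt_one hc₀ hc₁, div_eq_mul_inv]

section NormedGroup

variable {E : Type*} [NormedAddCommGroup E]

lemma rpow_norm_sub_le_of_notMem_ball {x y : E} {r s : ℝ} (hr : 0 < r) (hs : s ≤ 0)
    (hy : y ∉ ball x r) : ‖x - y‖ ^ s ≤ r ^ s := by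
  refine Real.rpow_le_rpow_of_nonpos hr ?_ hs
  rw [← dist_eq_norm, dist_comm]
  exact not_lt.mp hy

variable [MeasurableSpace E] [OpensMeasurableSpace E] {μ : Measure E}

lemma setLIntegral_compl_ball_rpow_mul_le_lintegral {g : E → ℝ≥0∞} {x : E} {δ s : ℝ}
    (hδ : 0 < δ) (hs : s ≤ 0) :
    ∫⁻ y in (ball x δ)ᶜ, ENNReal.ofReal (‖x - y‖ ^ s) * g y ∂μ
      ≤ ENNReal.ofReal (δ ^ s) * ∫⁻ y, g y ∂μ :=
  calc ∫⁻ y in (ball x δ)ᶜ, ENNReal.ofReal (‖x - y‖ ^ s) * g y ∂μ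
      ≤ ∫⁻ y in (ball x δ)ᶜ, ENNReal.ofReal (δ ^ s) * g y ∂μ :=
        setLIntegral_mono' measurableSet_ball.compl fun y hy => by
          gcongr ?_ * _
          exact ofReal_le_ofReal (rpow_norm_sub_le_of_notMem_ball hδ hs hy)
    _ ≤ ENNReal.ofReal (δ ^ s) * ∫⁻ y, g y ∂μ := by
        rw [lintegral_const_mul' _ _ ofReal_ne_top]
        gcongr
        exact Measure.restrict_le_self

end NormedGroup

section AddHaar

variable {E : Type*} [NormedAddCommGroup E] [NormedSpace ℝ E] [FiniteDimensional ℝ E]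
  [MeasurableSpace E] [BorelSpace E] {μ : Measure E} [μ.IsAddHaarMeasure]

lemma setLIntegral_dyadicAnnulus_rpow_mul_le {g : E → ℝ≥0∞} {M : ℝ≥0∞} {x : E} {r s : ℝ}
    (hr : 0 < r) (hs : s ≤ 0)
    (hM : ∫⁻ y in ball x (2 * r), g y ∂μ ≤ μ (ball x (2 * r)) * M) :
    ∫⁻ y in dyadicAnnulus x r, ENNReal.ofReal (‖x - y‖ ^ s) * g y ∂μ
      ≤ ENNReal.ofReal (2 ^ finrank ℝ E * r ^ (s + finrank ℝ E)) * μ (ball 0 1) * M := by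
  calc ∫⁻ y in dyadicAnnulus x r, ENNReal.ofReal (‖x - y‖ ^ s) * g y ∂μ
      ≤ ∫⁻ y in dyadicAnnulus x r, ENNReal.ofReal (r ^ s) * g y ∂μ := by
        refine setLIntegral_mono' measurableSet_dyadicAnnulus fun y hy => ?_
        gcongr ?_ * _
        exact ofReal_le_ofReal (rpow_norm_sub_le_of_notMem_ball hr hs hy.2)
    _ ≤ ENNReal.ofReal (r ^ s) * ∫⁻ y in ball x (2 * r), g y ∂μ := by
        rw [lintegral_const_mul' _ _ ofReal_ne_top]
        gcongr
        exact sdiff_subset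
    _ ≤ ENNReal.ofReal (r ^ s) * (μ (ball x (2 * r)) * M) := by gcongr
    _ = ENNReal.ofReal (2 ^ finrank ℝ E * r ^ (s + finrank ℝ E)) * μ (ball 0 1) * M := by
        rw [Measure.addHaar_ball_of_pos μ x (by positivity), ← mul_assoc, ← mul_assoc,
          ← ENNReal.ofReal_mul (by positivity), Real.rpow_add hr, Real.rpow_natCast, mul_pow]
        ring_nf

lemma setLIntegral_ball_rpow_mul_le {g : E → ℝ≥0∞} {M : ℝ≥0∞} {x : E} {δ s : ℝ} (hδ : 0 < δ)
    (hs : s ≤ 0) (hsd : -(finrank ℝ E : ℝ) < s)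
    (hM : ∀ r > 0, ∫⁻ y in ball x r, g y ∂μ ≤ μ (ball x r) * M) :
    ∫⁻ y in ball x δ, ENNReal.ofReal (‖x - y‖ ^ s) * g y ∂μ
      ≤ ENNReal.ofReal (2 ^ finrank ℝ E / (2 ^ (s + finrank ℝ E) - 1) * δ ^ (s + finrank ℝ E))
        * μ (ball 0 1) * M := by
  have : Nontrivial E :=
    Module.nontrivial_of_finrank_pos (R := ℝ) (by exact_mod_cast neg_lt_zero.mp (hsd.trans_le hs))
  set a := s + (finrank ℝ E : ℝ)
  have hc : 1 < (2:ℝ) ^ a := Real.one_lt_rpow one_lt_two (by linarith)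
  have hterm : ∀ k : ℕ, 2 ^ finrank ℝ E * (δ / 2 ^ (k + 1)) ^ a
      = 2 ^ finrank ℝ E * δ ^ a / 2 ^ a * ((2 ^ a)⁻¹) ^ k := fun k => by
    rw [Real.div_rpow hδ.le (by positivity), ← Real.rpow_pow_comm zero_le_two, inv_pow, pow_succ]
    field_simp
  calc ∫⁻ y in ball x δ, ENNReal.ofReal (‖x - y‖ ^ s) * g y ∂μ
      = ∫⁻ y in ball x δ \ {x}, ENNReal.ofReal (‖x - y‖ ^ s) * g y ∂μ :=
        setLIntegral_congr (sdiff_null_ae_eq_self (measure_singleton x)).symm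
    _ ≤ ∫⁻ y in ⋃ k : ℕ, dyadicAnnulus x (δ / 2 ^ (k + 1)),
          ENNReal.ofReal (‖x - y‖ ^ s) * g y ∂μ :=
        lintegral_mono_set (ball_diff_singleton_subset_iUnion_dyadicAnnulus hδ)
    _ ≤ ∑' k : ℕ, ∫⁻ y in dyadicAnnulus x (δ / 2 ^ (k + 1)),
          ENNReal.ofReal (‖x - y‖ ^ s) * g y ∂μ := lintegral_iUnion_le _ _
    _ ≤ ∑' k : ℕ, ENNReal.ofReal (2 ^ finrank ℝ E * (δ / 2 ^ (k + 1)) ^ a) * μ (ball 0 1) * M :=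
        ENNReal.tsum_le_tsum fun k =>
          setLIntegral_dyadicAnnulus_rpow_mul_le (by positivity) hs (hM _ (by positivity))
    _ = ENNReal.ofReal (2 ^ finrank ℝ E / (2 ^ a - 1) * δ ^ a) * μ (ball 0 1) * M := by
        rw [ENNReal.tsum_mul_right, ENNReal.tsum_mul_right]
        simp_rw [hterm]
        rw [tsum_ofReal_mul_pow (by positivity) (by positivity) (inv_lt_one_of_one_lt₀ hc)]
        congr 3
        field_simp

lemma setLIntegral_compl_ball_rpow_le {x : E} {δ s : ℝ} (hδ : 0 < δ)
    (hsd : s + finrank ℝ E < 0) :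
    ∫⁻ y in (ball x δ)ᶜ, ENNReal.ofReal (‖x - y‖ ^ s) ∂μ
      ≤ ENNReal.ofReal (2 ^ finrank ℝ E / (1 - 2 ^ (s + finrank ℝ E)) * δ ^ (s + finrank ℝ E))
        * μ (ball 0 1) := by
  set a := s + (finrank ℝ E : ℝ)
  have hs : s ≤ 0 := by linarith [(finrank ℝ E).cast_nonneg (α := ℝ)]
  have hc : (2:ℝ) ^ a < 1 := Real.rpow_lt_one_of_one_lt_of_neg one_lt_two hsd
  have hterm : ∀ k : ℕ, 2 ^ finrank ℝ E * (δ * 2 ^ k) ^ a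
      = 2 ^ finrank ℝ E * δ ^ a * (2 ^ a) ^ k := fun k => by
    rw [Real.mul_rpow hδ.le (by positivity), ← Real.rpow_pow_comm zero_le_two]
    ring
  calc ∫⁻ y in (ball x δ)ᶜ, ENNReal.ofReal (‖x - y‖ ^ s) ∂μ
      ≤ ∫⁻ y in ⋃ k : ℕ, dyadicAnnulus x (δ * 2 ^ k), ENNReal.ofReal (‖x - y‖ ^ s) ∂μ :=
        lintegral_mono_set (compl_ball_subset_iUnion_dyadicAnnulus hδ)
    _ ≤ ∑' k : ℕ, ∫⁻ y in dyadicAnnulus x (δ * 2 ^ k), ENNReal.ofReal (‖x - y‖ ^ s) ∂μ :=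
        lintegral_iUnion_le _ _
    _ ≤ ∑' k : ℕ, ENNReal.ofReal (2 ^ finrank ℝ E * (δ * 2 ^ k) ^ a) * μ (ball 0 1) := by
        refine ENNReal.tsum_le_tsum fun k => ?_
        simpa only [mul_one] using setLIntegral_dyadicAnnulus_rpow_mul_le (μ := μ)
          (g := fun _ => 1) (M := 1) (x := x) (r := δ * 2 ^ k) (by positivity) hs
          (by rw [setLIntegral_one, mul_one])
    _ = ENNReal.ofReal (2 ^ finrank ℝ E / (1 - 2 ^ a) * δ ^ a) * μ (ball 0 1) := by
        rw [ENNReal.tsum_mul_right]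
        simp_rw [hterm]
        rw [tsum_ofReal_mul_pow (by positivity) (by positivity) hc]
        congr 2
        ring

lemma setLIntegral_compl_ball_rpow_mul_le_of_holderConjugate {g : E → ℝ≥0∞}
    (hg : AEMeasurable g μ) {x : E} {δ s p q : ℝ} (hδ : 0 < δ) (hpq : p.HolderConjugate q)
    (hsq : s * q + finrank ℝ E < 0) :
    ∫⁻ y in (ball x δ)ᶜ, ENNReal.ofReal (‖x - y‖ ^ s) * g y ∂μ
      ≤ eLpNorm g (ENNReal.ofReal p) μ *
        (ENNReal.ofReal (2 ^ finrank ℝ E / (1 - 2 ^ (s * q + finrank ℝ E)) *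
          δ ^ (s * q + finrank ℝ E)) * μ (ball 0 1)) ^ (1 / q) := by
  have hg_norm : eLpNorm g (ENNReal.ofReal p) μ = (∫⁻ y, g y ^ p ∂μ) ^ (1 / p) := by
    rw [eLpNorm_eq_lintegral_rpow_enorm_toReal (by simpa using hpq.pos) ofReal_ne_top,
      toReal_ofReal hpq.nonneg]
    simp only [enorm_eq_self]
  have hK : AEMeasurable (fun y => ENNReal.ofReal (‖x - y‖ ^ s)) (μ.restrict (ball x δ)ᶜ) := by
    fun_prop
  have hKq (y : E) : ENNReal.ofReal (‖x - y‖ ^ s) ^ q = ENNReal.ofReal (‖x - y‖ ^ (s * q)) := by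
    rw [ofReal_rpow_of_nonneg (by positivity) hpq.symm.nonneg, Real.rpow_mul (norm_nonneg _)]
  calc ∫⁻ y in (ball x δ)ᶜ, ENNReal.ofReal (‖x - y‖ ^ s) * g y ∂μ
      = ∫⁻ y in (ball x δ)ᶜ, (g * fun y => ENNReal.ofReal (‖x - y‖ ^ s)) y ∂μ := by
        simp only [Pi.mul_apply, mul_comm]
    _ ≤ (∫⁻ y in (ball x δ)ᶜ, g y ^ p ∂μ) ^ (1 / p) *
          (∫⁻ y in (ball x δ)ᶜ, ENNReal.ofReal (‖x - y‖ ^ s) ^ q ∂μ) ^ (1 / q) :=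
        ENNReal.lintegral_mul_le_Lp_mul_Lq _ hpq hg.restrict hK
    _ ≤ _ := by
        simp only [hKq, hg_norm]
        gcongr ?_ ^ _ * ?_ ^ _
        · exact hpq.one_div_nonneg
        · exact setLIntegral_le_lintegral _ _
        · exact hpq.symm.one_div_nonneg
        · exact setLIntegral_compl_ball_rpow_le hδ hsq

lemma exists_setLIntegral_compl_ball_rpow_mul_le_eLpNorm {s p : ℝ} (hp : 1 ≤ p)
    (hsp : s + finrank ℝ E - finrank ℝ E / p < 0) :
    ∃ C : ℝ, 0 < C ∧ ∀ g : E → ℝ≥0∞, AEMeasurable g μ → ∀ (x : E) (δ : ℝ), 0 < δ →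
      ∫⁻ y in (ball x δ)ᶜ, ENNReal.ofReal (‖x - y‖ ^ s) * g y ∂μ
        ≤ ENNReal.ofReal (C * δ ^ (s + finrank ℝ E - finrank ℝ E / p)) *
          eLpNorm g (ENNReal.ofReal p) μ := by
  rcases hp.eq_or_lt with rfl | hp
  · refine ⟨1, one_pos, fun g _ x δ hδ => ?_⟩
    rw [ENNReal.ofReal_one, eLpNorm_one_eq_lintegral_enorm, div_one, add_sub_cancel_right,
      one_mul]
    simpa only [enorm_eq_self] using
      setLIntegral_compl_ball_rpow_mul_le_lintegral hδ (by simpa using hsp.le)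
  · set q := p.conjExponent
    have hpq : p.HolderConjugate q := .conjExponent hp
    set d := (finrank ℝ E : ℝ)
    set t := s + d - d / p
    have hq : s * q + d = t * q := by
      have hdiv : q / p = q - 1 := by
        rw [div_eq_iff hpq.ne_zero]
        linear_combination -hpq.sub_one_mul_conj
      linear_combination d * hdiv
    have hsq : s * q + d < 0 := hq ▸ mul_neg_of_neg_of_pos hsp hpq.symm.pos
    set A := (2 : ℝ) ^ finrank ℝ E / (1 - 2 ^ (s * q + d))
    have hA : 0 < A :=
      div_pos (by positivity) (sub_pos.mpr (Real.rpow_lt_one_of_one_lt_of_neg one_lt_two hsq))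
    have hV : 0 < (μ (ball 0 1)).toReal :=
      ENNReal.toReal_pos (measure_ball_pos μ 0 one_pos).ne' measure_ball_lt_top.ne
    refine ⟨(A * (μ (ball 0 1)).toReal) ^ (1 / q), by positivity, fun g hg x δ hδ => ?_⟩
    calc ∫⁻ y in (ball x δ)ᶜ, ENNReal.ofReal (‖x - y‖ ^ s) * g y ∂μ
        ≤ eLpNorm g (ENNReal.ofReal p) μ *
          (ENNReal.ofReal (A * δ ^ (s * q + d)) * μ (ball 0 1)) ^ (1 / q) :=
          setLIntegral_compl_ball_rpow_mul_le_of_holderConjugate hg hδ hpq hsq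
      _ = ENNReal.ofReal ((A * (μ (ball 0 1)).toReal) ^ (1 / q) * δ ^ t) *
          eLpNorm g (ENNReal.ofReal p) μ := by
        rw [mul_comm, ← ofReal_toReal (a := μ (ball 0 1)) measure_ball_lt_top.ne,
          ← ofReal_mul (by positivity),
          ofReal_rpow_of_nonneg (by positivity) hpq.symm.one_div_nonneg]
        congr 2
        rw [hq, Real.rpow_mul hδ.le, mul_right_comm,
          Real.mul_rpow (by positivity) (by positivity), one_div,
          Real.rpow_rpow_inv (by positivity) hpq.symm.ne_zero, toReal_ofReal hV.le]

end AddHaar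

lemma exists_ofReal_rpow_mul_eq_rpow_mul_rpow {a b : ℝ} (hba : b < a) {M N : ℝ≥0∞}
    (hM0 : M ≠ 0) (hM : M ≠ ⊤) (hN0 : N ≠ 0) (hN : N ≠ ⊤) :
    ∃ δ : ℝ, 0 < δ ∧
      ENNReal.ofReal (δ ^ a) * M = N ^ (a / (a - b)) * M ^ (1 - a / (a - b)) ∧
      ENNReal.ofReal (δ ^ b) * N = N ^ (a / (a - b)) * M ^ (1 - a / (a - b)) := by
  obtain ⟨m, hm, rfl⟩ : ∃ m : ℝ, 0 < m ∧ M = ENNReal.ofReal m :=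
    ⟨M.toReal, toReal_pos hM0 hM, (ofReal_toReal hM).symm⟩
  obtain ⟨ν, hν, rfl⟩ : ∃ ν : ℝ, 0 < ν ∧ N = ENNReal.ofReal ν :=
    ⟨N.toReal, toReal_pos hN0 hN, (ofReal_toReal hN).symm⟩
  set θ := a / (a - b) with hθ
  set u := ν / m
  have hu : 0 < u := div_pos hν hm
  have hδa : (u ^ (1 / (a - b))) ^ a = u ^ θ := by
    rw [← Real.rpow_mul hu.le, one_div_mul_eq_div]
  have hδb : (u ^ (1 / (a - b))) ^ b = u ^ θ / u := by
    rw [← Real.rpow_mul hu.le, ← Real.rpow_sub_one hu.ne', hθ]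
    congr 1
    field_simp [(sub_pos.mpr hba).ne']
    ring
  have hRHS :
      ENNReal.ofReal ν ^ θ * ENNReal.ofReal m ^ (1 - θ) = ENNReal.ofReal (u ^ θ * m) := by
    rw [ofReal_rpow_of_pos hν, ofReal_rpow_of_pos hm, ← ofReal_mul (by positivity),
      Real.div_rpow hν.le hm.le, Real.rpow_sub hm, Real.rpow_one]
    field_simp
  refine ⟨u ^ (1 / (a - b)), by positivity, ?_, ?_⟩
  · rw [hRHS, hδa, ← ofReal_mul (by positivity)]
  · have hνu : ν / u = m := div_div_cancel₀ hν.ne'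
    rw [hRHS, hδb, ← ofReal_mul (by positivity), div_mul_eq_mul_div, mul_div_assoc, hνu]

lemma le_ofReal_mul_rpow_mul_rpow_of_forall_le {I M N : ℝ≥0∞} {C₁ C₂ a b : ℝ}
    (hC₁ : 0 < C₁) (hC₂ : 0 < C₂) (ha : 0 < a) (hb : b < 0) (hM0 : M ≠ 0) (hN0 : N ≠ 0)
    (hN : N ≠ ⊤)
    (h : ∀ δ : ℝ, 0 < δ →
      I ≤ ENNReal.ofReal (C₁ * δ ^ a) * M + ENNReal.ofReal (C₂ * δ ^ b) * N) :
    I ≤ ENNReal.ofReal (C₁ + C₂) * N ^ (a / (a - b)) * M ^ (1 - a / (a - b)) := by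
  have hθ : a / (a - b) < 1 := (div_lt_one (by linarith)).mpr (by linarith)
  rcases eq_or_ne M ⊤ with rfl | hM
  · rw [top_rpow_of_pos (by linarith), mul_top]
    · exact le_top
    · exact mul_ne_zero (by simpa using by linarith) (by simp [rpow_eq_zero_iff, hN0, hN])
  obtain ⟨δ, hδ, hδM, hδN⟩ :=
    exists_ofReal_rpow_mul_eq_rpow_mul_rpow (hb.trans ha) hM0 hM hN0 hN
  calc I ≤ ENNReal.ofReal (C₁ * δ ^ a) * M + ENNReal.ofReal (C₂ * δ ^ b) * N := h δ hδ
    _ = ENNReal.ofReal (C₁ + C₂) * N ^ (a / (a - b)) * M ^ (1 - a / (a - b)) := by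
      rw [ofReal_mul hC₁.le, ofReal_mul hC₂.le, mul_assoc, hδM, mul_assoc, hδN,
        ofReal_add hC₁.le hC₂.le, ← add_mul, mul_assoc]

section Maximal

variable {n : ℕ}

lemma setLIntegral_ball_enorm_le_measure_mul_maximalFn (f : EuclideanSpace ℝ (Fin n) → ℝ)
    (x : EuclideanSpace ℝ (Fin n)) {r : ℝ} (hr : 0 < r) :
    ∫⁻ y in ball x r, ‖f y‖ₑ ≤ volume (ball x r) * maximalFn f x := by
  rw [← ENNReal.inv_mul_le_iff (measure_ball_pos volume x hr).ne' measure_ball_lt_top.ne]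
  simp only [Real.enorm_eq_ofReal_abs]
  exact le_iSup₂ (f := fun r (_ : r ∈ Ioi (0 : ℝ)) =>
    (volume (ball x r))⁻¹ * ∫⁻ y in ball x r, ENNReal.ofReal |f y|) r hr

lemma ae_eq_zero_of_maximalFn_eq_zero {f : EuclideanSpace ℝ (Fin n) → ℝ} (hf : AEMeasurable f)
    {x : EuclideanSpace ℝ (Fin n)} (h : maximalFn f x = 0) : f =ᵐ[volume] 0 := by
  have hball : ∀ k : ℕ, ∀ᵐ y ∂volume.restrict (ball x (k + 1)), f y = 0 := fun k => by
    have hk := setLIntegral_ball_enorm_le_measure_mul_maximalFn f x (r := k + 1) (by positivity)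
    rw [h, mul_zero, nonpos_iff_eq_zero, lintegral_eq_zero_iff' hf.enorm.restrict] at hk
    filter_upwards [hk] with y hy using enorm_eq_zero.mp hy
  rw [← Measure.restrict_univ (μ := volume), ← iUnion_ball_nat_succ x]
  exact (ae_restrict_iUnion_iff _ _).mpr hball

end Maximal

lemma rieszGamma_pos {n : ℕ} {α : ℝ} (hα0 : 0 < α) (hαn : α < n) : 0 < rieszGamma n α := by
  unfold rieszGamma
  have := Real.Gamma_pos_of_pos (half_pos hα0)
  have := Real.Gamma_pos_of_pos (half_pos (sub_pos.mpr hαn))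
  positivity

theorem exists_lintegral_rpow_mul_le_maximalFn_add_eLpNorm {n : ℕ} {α p : ℝ} (hα0 : 0 < α)
    (hαn : α < n) (hp1 : 1 ≤ p) (hαp : α < n / p) :
    ∃ C₁ C₂ : ℝ, 0 < C₁ ∧ 0 < C₂ ∧ ∀ f : EuclideanSpace ℝ (Fin n) → ℝ, AEMeasurable f →
      ∀ (x : EuclideanSpace ℝ (Fin n)) (δ : ℝ), 0 < δ →
        ∫⁻ y, ENNReal.ofReal (‖x - y‖ ^ (α - n)) * ‖f y‖ₑ
          ≤ ENNReal.ofReal (C₁ * δ ^ α) * maximalFn f x +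
            ENNReal.ofReal (C₂ * δ ^ (α - n / p)) * eLpNorm f (ENNReal.ofReal p) volume := by
  obtain ⟨C₂, hC₂, hC₂_le⟩ := exists_setLIntegral_compl_ball_rpow_mul_le_eLpNorm
    (μ := (volume : Measure (EuclideanSpace ℝ (Fin n)))) (s := α - n) hp1
    (by rwa [finrank_euclideanSpace_fin, sub_add_cancel, sub_neg])
  have hV : volume (ball (0 : EuclideanSpace ℝ (Fin n)) 1) ≠ ⊤ := measure_ball_lt_top.ne
  have hV0 : 0 < (volume (ball (0 : EuclideanSpace ℝ (Fin n)) 1)).toReal :=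
    toReal_pos (measure_ball_pos volume _ one_pos).ne' hV
  have h2α : 1 < (2 : ℝ) ^ α := Real.one_lt_rpow one_lt_two hα0
  have hC₁ : 0 < (2 : ℝ) ^ n / (2 ^ α - 1) := div_pos (by positivity) (by linarith)
  refine ⟨2 ^ n / (2 ^ α - 1) * (volume (ball (0 : EuclideanSpace ℝ (Fin n)) 1)).toReal, C₂,
    by positivity, hC₂, fun f hf x δ hδ => ?_⟩
  rw [← lintegral_add_compl _ (measurableSet_ball (x := x) (ε := δ))]
  gcongr
  · have hnear := setLIntegral_ball_rpow_mul_le (μ := volume) (s := α - n) hδ (by linarith)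
      (by rw [finrank_euclideanSpace_fin]; linarith)
      fun r hr => setLIntegral_ball_enorm_le_measure_mul_maximalFn f x hr
    rw [finrank_euclideanSpace_fin, sub_add_cancel, ← ofReal_toReal hV,
      ← ofReal_mul (by positivity), mul_right_comm _ (δ ^ α)] at hnear
    exact hnear
  · simpa only [eLpNorm_enorm, finrank_euclideanSpace_fin, sub_add_cancel] using
      hC₂_le _ hf.enorm x δ hδ

theorem hedberg_pointwise_inequality_general (n : ℕ) (α p : ℝ)
    (hα0 : 0 < α) (hαn : α < n) (hp1 : 1 ≤ p) (hp2 : p < (n : ℝ) / α) :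
    ∃ A : ℝ, 0 < A ∧
      ∀ f : EuclideanSpace ℝ (Fin n) → ℝ, Measurable f → (∀ x, 0 ≤ f x) →
        MemLp f (ENNReal.ofReal p) volume →
        ∀ x : EuclideanSpace ℝ (Fin n),
          ENNReal.ofReal (rieszGamma n α)⁻¹ *
              (∫⁻ y, ENNReal.ofReal (‖x - y‖ ^ (α - (n : ℝ)) * f y))
            ≤ ENNReal.ofReal A *
                (eLpNorm f (ENNReal.ofReal p) volume) ^ (α * p / n) *
                (maximalFn f x) ^ (1 - α * p / n) := by
  have hαp : α < n / p := by
    rw [lt_div_iff₀ (by linarith)]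
    rwa [lt_div_iff₀ hα0, mul_comm] at hp2
  obtain ⟨C₁, C₂, hC₁, hC₂, hsplit⟩ :=
    exists_lintegral_rpow_mul_le_maximalFn_add_eLpNorm hα0 hαn hp1 hαp
  have hγ := rieszGamma_pos hα0 hαn
  refine ⟨(rieszGamma n α)⁻¹ * (C₁ + C₂), by positivity, fun f hf hf0 hfp x => ?_⟩
  have hθ : α / (α - (α - n / p)) = α * p / n := by
    rw [_root_.sub_sub_cancel, div_div_eq_mul_div]
  rw [ofReal_mul (inv_nonneg.mpr hγ.le), mul_assoc, mul_assoc]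
  gcongr
  rw [lintegral_congr fun y => by rw [ofReal_mul (by positivity), ← Real.enorm_eq_ofReal (hf0 y)],
    ← mul_assoc, ← hθ]
  by_cases hf_ae : f =ᵐ[volume] 0
  · rw [lintegral_congr_ae (g := fun _ => 0) (by filter_upwards [hf_ae] with y hy; simp [hy]),
      lintegral_zero]
    exact zero_le
  have hp0 : ENNReal.ofReal p ≠ 0 := by simpa using by linarith
  exact le_ofReal_mul_rpow_mul_rpow_of_forall_le hC₁ hC₂ hα0 (sub_neg.mpr hαp)
    (mt (ae_eq_zero_of_maximalFn_eq_zero hf.aemeasurable) hf_ae)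
    (mt (eLpNorm_eq_zero_iff hf.aestronglyMeasurable hp0).mp hf_ae) hfp.eLpNorm_ne_top
    (hsplit f hf.aemeasurable x)

/-- **Hedberg's pointwise inequality.** Let `0 < α < n`, `1 ≤ p < n/α`. There is
`A = A(n, α, p) > 0` such that for every measurable `f ≥ 0` with `f ∈ L^p(ℝⁿ)` and every
`x ∈ ℝⁿ`, `I_α f(x) ≤ A ‖f‖_p^(αp/n) (Mf(x))^(1-αp/n)`, the Riesz potential
`I_α f(x) = (1/γ_n(α)) ∫ |x-y|^(α-n) f(y) dy` being interpreted in the extended reals. -/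
theorem hedberg_pointwise_inequality (n : ℕ) (hn : 0 < n) (α p : ℝ)
    (hα0 : 0 < α) (hαn : α < n) (hp1 : 1 ≤ p) (hp2 : p < (n : ℝ) / α) :
    ∃ A : ℝ, 0 < A ∧
      ∀ f : EuclideanSpace ℝ (Fin n) → ℝ, Measurable f → (∀ x, 0 ≤ f x) →
        MemLp f (ENNReal.ofReal p) volume →
        ∀ x : EuclideanSpace ℝ (Fin n),
          ENNReal.ofReal (rieszGamma n α)⁻¹ *
              (∫⁻ y, ENNReal.ofReal (‖x - y‖ ^ (α - (n : ℝ)) * f y))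
            ≤ ENNReal.ofReal A *
                (eLpNorm f (ENNReal.ofReal p) volume) ^ (α * p / n) *
                (maximalFn f x) ^ (1 - α * p / n) :=
  hedberg_pointwise_inequality_general n α p hα0 hαn hp1 hp2
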